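/- arXiv:2007.02582 — 7 statements merged into one kernel-verified Lean document; each statement's English description precedes it below -/
import Mathlib

section
/- With 𝔏 = W ⋉ (𝔤 ⊗ ℂ[t,t⁻¹]) as above, the subspace 𝔞_0 = (t-1)W ⋉ (𝔤 ⊗ ℂ[t,t⁻¹]) is a Lie subalgebra of 𝔏, and for each k ∈ ℤ≥0, 𝔞_k = (t-1)^{k+1} W ⋉ (𝔤 ⊗ (t-1)^k ℂ[t,t⁻¹]) is an ideal of 𝔞_0. -/
/-!
STATEMENT 3: With `𝔏 = W ⋉ (𝔤 ⊗ ℂ[t,t⁻¹])`, the subspace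
`𝔞_0 = (t-1)W ⋉ (𝔤 ⊗ ℂ[t,t⁻¹])` is a Lie subalgebra of `𝔏`, and for each
`k ∈ ℤ≥0`, `𝔞_k = (t-1)^{k+1}W ⋉ (𝔤 ⊗ (t-1)^k ℂ[t,t⁻¹])` is an ideal of `𝔞_0`.

Abstract faithful model: `L` is a Lie algebra over ℂ with elements
`d i` (Witt basis), `x s j = x_s ⊗ t^j`, satisfying the defining brackets of
`𝔏`; the bracket on `𝔤` is encoded by structure constants
`c : S → S → (S →₀ ℂ)` with `[x_s, x_p] = ∑_q (c s p) q · x_q`.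
`𝔞_k` is the span of the elements `(t-1)^{k+1} d_i` and `(t-1)^k x_s(j)`.
-/

variable {L : Type*} [LieRing L] [LieAlgebra ℂ L] {S : Type*}

/-- `(t-1)^k d_i`, expanded in the basis `{d_n}`. -/
noncomputable def td (d : ℤ → L) (k : ℕ) (i : ℤ) : L :=
  ∑ r ∈ Finset.range (k + 1), ((-1 : ℂ) ^ (k - r) * (k.choose r : ℂ)) • d (i + r)

/-- `(t-1)^k x_s(j)`, expanded in the basis `{x_s(n)}`. -/
noncomputable def tx (x : S → ℤ → L) (k : ℕ) (s : S) (j : ℤ) : L :=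
  ∑ r ∈ Finset.range (k + 1), ((-1 : ℂ) ^ (k - r) * (k.choose r : ℂ)) • x s (j + r)

/-- The subspace `𝔞_k = (t-1)^{k+1} W ⋉ (𝔤 ⊗ (t-1)^k ℂ[t,t⁻¹])`. -/
noncomputable def aSub (d : ℤ → L) (x : S → ℤ → L) (k : ℕ) : Submodule ℂ L :=
  Submodule.span ℂ
    ((Set.range fun i : ℤ => td d (k + 1) i) ∪
      (Set.range fun p : S × ℤ => tx x k p.1 p.2))

/-! `(t-1)^k` acts on the index as the `k`-th forward difference, so Pascal's rule
`(t-1)^{k+1} d_i = (t-1)^k d_{i+1} - (t-1)^k d_i` keeps all higher differences of the generators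
of `𝔞_k` inside `𝔞_k`. Inducting on the exponent with the same rule, the defining brackets give the
brackets of the generators `(t-1) d_i`, `x_s(j)` of `𝔞_0` with those of `𝔞_k` in closed form, e.g.
`[(t-1) d_i, (t-1)^b d_j] = (b-1) (t-1)^b d_{i+j+1} + (j-i) (t-1)^{b+1} d_{i+j}`,
visibly combinations of such differences; bilinearity passes from generators to spans. -/

open Finset

theorem sum_neg_one_pow_choose_smul_eq_fwdDiff_iter {R M : Type*} [Ring R] [AddCommGroup M]
    [Module R M] (f : ℤ → M) (k : ℕ) (i : ℤ) :
    ∑ r ∈ range (k + 1), ((-1 : R) ^ (k - r) * (k.choose r : R)) • f (i + r) =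
      (fwdDiff 1)^[k] f i := by
  rw [fwdDiff_iter_eq_sum_shift]
  refine sum_congr rfl fun r _ => ?_
  rw [← Int.cast_smul_eq_zsmul R, nsmul_one]
  push_cast
  rfl

theorem lie_mem_of_forall_mem_of_mem_span {R L : Type*} [CommRing R] [LieRing L] [LieAlgebra R L]
    {s t : Set L} {P : Submodule R L} (h : ∀ u ∈ s, ∀ v ∈ t, ⁅u, v⁆ ∈ P) :
    ∀ u ∈ Submodule.span R s, ∀ v ∈ Submodule.span R t, ⁅u, v⁆ ∈ P := by
  have hle : Submodule.map₂ (LieModule.toEnd R L L : L →ₗ[R] Module.End R L)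
      (Submodule.span R s) (Submodule.span R t) ≤ P := by
    rw [Submodule.map₂_span_span, Submodule.span_le]
    rintro _ ⟨u, hu, v, hv, rfl⟩
    exact h u hu v hv
  exact fun u hu v hv => hle (Submodule.apply_mem_map₂ _ hu hv)

section Brackets

variable (d : ℤ → L) (x : S → ℤ → L)

theorem td_eq_fwdDiff_iter (k : ℕ) (i : ℤ) : td d k i = (fwdDiff 1)^[k] d i :=
  sum_neg_one_pow_choose_smul_eq_fwdDiff_iter d k i

theorem tx_eq_fwdDiff_iter (k : ℕ) (s : S) (j : ℤ) : tx x k s j = (fwdDiff 1)^[k] (x s) j :=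
  sum_neg_one_pow_choose_smul_eq_fwdDiff_iter (x s) k j

@[simp] theorem td_zero (i : ℤ) : td d 0 i = d i := by
  simp [td_eq_fwdDiff_iter]

@[simp] theorem tx_zero (s : S) (j : ℤ) : tx x 0 s j = x s j := by
  simp [tx_eq_fwdDiff_iter]

theorem td_succ (k : ℕ) (i : ℤ) : td d (k + 1) i = td d k (i + 1) - td d k i := by
  simp only [td_eq_fwdDiff_iter, Function.iterate_succ_apply', fwdDiff]

theorem tx_succ (k : ℕ) (s : S) (j : ℤ) : tx x (k + 1) s j = tx x k s (j + 1) - tx x k s j := by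
  simp only [tx_eq_fwdDiff_iter, Function.iterate_succ_apply', fwdDiff]

theorem lie_td_one_td (hd : ∀ m n : ℤ, ⁅d m, d n⁆ = ((n : ℂ) - (m : ℂ)) • d (m + n))
    (b : ℕ) (i j : ℤ) :
    ⁅td d 1 i, td d b j⁆ =
      ((b : ℂ) - 1) • td d b (i + j + 1) + ((j : ℂ) - i) • td d (b + 1) (i + j) := by
  induction b generalizing j with
  | zero =>
    simp only [td_succ, td_zero, sub_lie, hd, add_right_comm i 1 j]
    push_cast
    module
  | succ b ih =>
    rw [td_succ d b j, lie_sub, ih, ih]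
    simp only [td_succ, ← add_assoc]
    push_cast
    module

theorem lie_td_one_tx (β : S → ℂ)
    (hdx : ∀ (i : ℤ) (s : S) (k : ℤ), ⁅d i, x s k⁆ = ((k : ℂ) + (i : ℂ) * β s) • x s (i + k))
    (b : ℕ) (i : ℤ) (s : S) (j : ℤ) :
    ⁅td d 1 i, tx x b s j⁆ =
      ((b : ℂ) + β s) • tx x b s (i + j + 1) + ((j : ℂ) + i * β s) • tx x (b + 1) s (i + j) := by
  induction b generalizing j with
  | zero =>
    simp only [td_succ, td_zero, tx_succ, tx_zero, sub_lie, hdx, add_right_comm i 1 j]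
    push_cast
    module
  | succ b ih =>
    rw [tx_succ x b s j, lie_sub, ih, ih]
    simp only [tx_succ, ← add_assoc]
    push_cast
    module

theorem lie_td_succ_tx_zero (β : S → ℂ)
    (hdx : ∀ (i : ℤ) (s : S) (k : ℤ), ⁅d i, x s k⁆ = ((k : ℂ) + (i : ℂ) * β s) • x s (i + k))
    (a : ℕ) (i : ℤ) (s : S) (j : ℤ) :
    ⁅td d (a + 1) i, tx x 0 s j⁆ =
      (((a : ℂ) + 1) * β s) • tx x a s (i + j + 1) +
        ((j : ℂ) + i * β s) • tx x (a + 1) s (i + j) := by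
  induction a generalizing i with
  | zero =>
    rw [lie_td_one_tx d x β hdx]
    push_cast
    module
  | succ a ih =>
    rw [td_succ d (a + 1) i, sub_lie, ih, ih]
    simp only [tx_succ, add_right_comm i 1 j]
    push_cast
    module

theorem lie_tx_zero_tx (c : S → S → (S →₀ ℂ))
    (hxx : ∀ (s p : S) (j k : ℤ), ⁅x s j, x p k⁆ = (c s p).sum fun q a => a • x q (j + k))
    (b : ℕ) (s p : S) (j m : ℤ) :
    ⁅tx x 0 s j, tx x b p m⁆ = (c s p).sum fun q a => a • tx x b q (j + m) := by
  induction b generalizing m with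
  | zero => simp only [tx_zero, hxx]
  | succ b ih =>
    rw [tx_succ x b p m, lie_sub, ih, ih, ← Finsupp.sum_sub]
    simp only [tx_succ, smul_sub, add_assoc]

end Brackets

section Membership

variable (d : ℤ → L) (x : S → ℤ → L)

theorem td_mem_aSub (k n : ℕ) (i : ℤ) : td d (k + 1 + n) i ∈ aSub d x k := by
  induction n generalizing i with
  | zero => exact Submodule.subset_span (Or.inl ⟨i, rfl⟩)
  | succ n ih =>
    rw [← add_assoc, td_succ]
    exact sub_mem (ih (i + 1)) (ih i)

theorem tx_mem_aSub (k n : ℕ) (s : S) (j : ℤ) : tx x (k + n) s j ∈ aSub d x k := by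
  induction n generalizing j with
  | zero => exact Submodule.subset_span (Or.inr ⟨(s, j), rfl⟩)
  | succ n ih =>
    rw [← add_assoc, tx_succ]
    exact sub_mem (ih (j + 1)) (ih j)

theorem aSub_le_aSub_zero (k : ℕ) : aSub d x k ≤ aSub d x 0 := by
  refine Submodule.span_le.mpr ?_
  rintro _ (⟨i, rfl⟩ | ⟨⟨s, j⟩, rfl⟩)
  · simpa [add_comm] using td_mem_aSub d x 0 k i
  · simpa using tx_mem_aSub d x 0 k s j

theorem lie_mem_aSub_of_mem_aSub_zero (β : S → ℂ) (c : S → S → (S →₀ ℂ))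
    (hd : ∀ m n : ℤ, ⁅d m, d n⁆ = ((n : ℂ) - (m : ℂ)) • d (m + n))
    (hdx : ∀ (i : ℤ) (s : S) (k : ℤ), ⁅d i, x s k⁆ = ((k : ℂ) + (i : ℂ) * β s) • x s (i + k))
    (hxx : ∀ (s p : S) (j k : ℤ), ⁅x s j, x p k⁆ = (c s p).sum fun q a => a • x q (j + k))
    (k : ℕ) : ∀ u ∈ aSub d x 0, ∀ v ∈ aSub d x k, ⁅u, v⁆ ∈ aSub d x k := by
  refine lie_mem_of_forall_mem_of_mem_span ?_
  have gen_td (i : ℤ) : td d (k + 1) i ∈ aSub d x k := td_mem_aSub d x k 0 i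
  have gen_tx (s : S) (j : ℤ) : tx x k s j ∈ aSub d x k := tx_mem_aSub d x k 0 s j
  rintro _ (⟨i, rfl⟩ | ⟨⟨s, j⟩, rfl⟩) _ (⟨m, rfl⟩ | ⟨⟨p, n⟩, rfl⟩)
  · rw [lie_td_one_td d hd]
    exact add_mem (Submodule.smul_mem _ _ (gen_td _))
      (Submodule.smul_mem _ _ (td_mem_aSub d x k 1 _))
  · rw [lie_td_one_tx d x β hdx]
    exact add_mem (Submodule.smul_mem _ _ (gen_tx _ _))
      (Submodule.smul_mem _ _ (tx_mem_aSub d x k 1 _ _))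
  · rw [← lie_skew, lie_td_succ_tx_zero d x β hdx]
    exact neg_mem (add_mem (Submodule.smul_mem _ _ (gen_tx _ _))
      (Submodule.smul_mem _ _ (tx_mem_aSub d x k 1 _ _)))
  · rw [lie_tx_zero_tx x c hxx]
    exact Submodule.finsuppSum_mem _ _ _ _ fun q _ => Submodule.smul_mem _ _ (gen_tx q _)

end Membership

theorem aSub_subalgebra_and_ideal (d : ℤ → L) (x : S → ℤ → L) (β : S → ℂ)
    (c : S → S → (S →₀ ℂ))
    (hd : ∀ m n : ℤ, ⁅d m, d n⁆ = ((n : ℂ) - (m : ℂ)) • d (m + n))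
    (hdx : ∀ (i : ℤ) (s : S) (k : ℤ),
      ⁅d i, x s k⁆ = ((k : ℂ) + (i : ℂ) * β s) • x s (i + k))
    (hxx : ∀ (s p : S) (j k : ℤ),
      ⁅x s j, x p k⁆ = (c s p).sum fun q a => a • x q (j + k)) :
    (∀ u ∈ aSub d x 0, ∀ v ∈ aSub d x 0, ⁅u, v⁆ ∈ aSub d x 0) ∧
      ∀ k : ℕ, aSub d x k ≤ aSub d x 0 ∧
        ∀ u ∈ aSub d x 0, ∀ v ∈ aSub d x k, ⁅u, v⁆ ∈ aSub d x k := by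
  have ideal := lie_mem_aSub_of_mem_aSub_zero d x β c hd hdx hxx
  exact ⟨ideal 0, fun k => ⟨aSub_le_aSub_zero d x k, ideal k⟩⟩
end

section
/- Every finite codimensional ideal of the Lie algebra (t-1)W (the Witt algebra elements vanishing at t = 1) contains (t-1)^k W for sufficiently large k. Equivalently, every finite dimensional module V over (t-1)W is annihilated by (t-1)^k W for k large enough. -/
/-!
STATEMENT 6: Every finite codimensional ideal of the Lie algebra `(t-1)W`
(the Witt algebra elements vanishing at `t = 1`) contains `(t-1)^k W` for
sufficiently large `k`.

Concrete model: `W = Der ℂ[t,t⁻¹]` sits inside `End_ℂ(ℂ[t,t⁻¹])` with the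
commutator bracket; `wittD i = t^{i+1} d/dt` and `mulOp f` is multiplication
by `f`.  `(t-1)W` is the span `tW` of the `(t-1)^{k+1} d_i`; an ideal of it
is a subspace `J ≤ tW` with `[tW, J] ⊆ J`; finite codimension in `tW` means
that `tW ≤ J + C` for some finite dimensional subspace `C`.
-/

/-- The derivation `d_n = t^{n+1} d/dt` of `ℂ[t,t⁻¹]`. -/
noncomputable def wittD (n : ℤ) : Module.End ℂ (LaurentPolynomial ℂ) :=
  (AddMonoidAlgebra.coeffLinearEquiv ℂ).symm.toLinearMap ∘ₗ
    (Finsupp.lsum ℂ fun a : ℤ => (a : ℂ) • Finsupp.lsingle (a + n) :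
      (ℤ →₀ ℂ) →ₗ[ℂ] (ℤ →₀ ℂ)) ∘ₗ
    (AddMonoidAlgebra.coeffLinearEquiv ℂ).toLinearMap

/-- Multiplication by the Laurent polynomial `f`. -/
noncomputable def mulOp (f : LaurentPolynomial ℂ) :
    Module.End ℂ (LaurentPolynomial ℂ) :=
  LinearMap.mulLeft ℂ f

open LaurentPolynomial in
/-- The Lie algebra `(t-1)W`, as a subspace of `End_ℂ(ℂ[t,t⁻¹])`:
the span of the operators `(t-1)^{k+1} d_i`, `k ∈ ℕ`, `i ∈ ℤ`. -/
noncomputable def tW : Submodule ℂ (Module.End ℂ (LaurentPolynomial ℂ)) :=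
  Submodule.span ℂ
    (Set.range fun p : ℕ × ℤ => mulOp ((T 1 - 1) ^ (p.1 + 1)) * wittD p.2)

/-!
Writing elements of `W` as `f d/dt`, the bracket becomes `[f, g] = f g' - g f'`, `(t-1)W`
becomes `(t-1)ℂ[t,t⁻¹]`, and `J` becomes a subspace `P` stable under brackets with
`(t-1)ℂ[t,t⁻¹]`, of finite codimension in it. Put `g_{b,l} = (t-1)^{b+1} t^l`. The operator
`A = [t-1, ·]` satisfies `A g_{b,l} = b g_{b,l} + l g_{b+1,l-1}` and acts on the finite dimensional
quotient by `P`, where only finitely many integers are eigenvalues. Hence `g_{b,0} ∈ P` for `b`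
large. Bracketing with `g_{0,l}` then gives `b g_{b,l} ≡ l g_{b+1,l-1}` modulo `P`, so `g_{b,l}`
is an eigenvector of `A` modulo `P` with eigenvalue `2b`, and lies in `P` as well.
-/

namespace Module.End

variable {K V : Type*} [Field K] [CharZero K] [AddCommGroup V] [Module K V]

theorem exists_forall_ge_eigenspace_natCast_eq_bot [FiniteDimensional K V] (f : End K V) :
    ∃ N : ℕ, ∀ n ≥ N, f.eigenspace (n : K) = ⊥ := by
  obtain ⟨N, hN⟩ := (f.finite_hasEigenvalue.preimage Nat.cast_injective.injOn).bddAbove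
  refine ⟨N + 1, fun n hn => ?_⟩
  by_contra h
  have : n ≤ N := hN (hasEigenvalue_iff.mpr h)
  omega

theorem exists_forall_ge_mem_of_sub_natCast_smul_mem (f : End K V) {U W C : Submodule K V}
    [FiniteDimensional K C] (hU : U ≤ U.comap f) (hW : W ≤ W.comap f) (hUWC : U ≤ W ⊔ C) :
    ∃ N : ℕ, ∀ n ≥ N, ∀ x ∈ U, f x - (n : K) • x ∈ W → x ∈ W := by
  let fbar := W.mapQ W f hW
  let S := U.map W.mkQ
  have hS : S ≤ S.comap fbar := by
    rintro _ ⟨x, hx, rfl⟩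
    exact ⟨f x, hU hx, rfl⟩
  have : FiniteDimensional K S := by
    refine Submodule.finiteDimensional_of_le (S₂ := C.map W.mkQ) ?_
    simpa [S, Submodule.map_sup] using Submodule.map_mono (f := W.mkQ) hUWC
  let fS : End K S := fbar.restrict (p := S) (q := S) hS
  obtain ⟨N, hN⟩ := exists_forall_ge_eigenspace_natCast_eq_bot fS
  refine ⟨N, fun n hn x hx hfx => ?_⟩
  have hmem : (⟨W.mkQ x, x, hx, rfl⟩ : S) ∈ fS.eigenspace n := by
    rw [mem_eigenspace_iff]
    ext
    simpa [fS, fbar, ← Submodule.Quotient.mk_smul, Submodule.Quotient.eq] using hfx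
  rw [hN n hn, Submodule.mem_bot] at hmem
  simpa using congrArg Subtype.val hmem

end Module.End

theorem Submodule.comap_sup_of_le_range {R M N : Type*} [Ring R] [AddCommGroup M] [Module R M]
    [AddCommGroup N] [Module R N] {f : M →ₗ[R] N} {p q : Submodule R N}
    (hp : p ≤ LinearMap.range f) : (p ⊔ q).comap f = p.comap f ⊔ q.comap f := by
  refine le_antisymm (fun x hx => ?_) (sup_le (comap_mono le_sup_left) (comap_mono le_sup_right))
  obtain ⟨u, hu, c, hc, huc⟩ := mem_sup.mp hx
  obtain ⟨y, rfl⟩ := hp hu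
  refine mem_sup.mpr ⟨y, hu, x - y, ?_, add_sub_cancel y x⟩
  simpa [mem_comap, ← huc] using hc

theorem Submodule.finiteDimensional_comap_of_injective {K V W : Type*} [DivisionRing K]
    [AddCommGroup V] [Module K V] [AddCommGroup W] [Module K W] {f : V →ₗ[K] W}
    (hf : Function.Injective f) (C : Submodule K W) [FiniteDimensional K C] :
    FiniteDimensional K (C.comap f) :=
  Module.Finite.of_injective (f.restrict (p := C.comap f) (q := C) fun _ hx => hx)
    fun _ _ h => Subtype.ext (hf (congrArg Subtype.val h))

open LaurentPolynomial

theorem LaurentPolynomial.linearMap_ext {R M : Type*} [CommSemiring R] [AddCommMonoid M]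
    [Module R M] {φ ψ : R[T;T⁻¹] →ₗ[R] M} (h : ∀ n, φ (T n) = ψ (T n)) : φ = ψ := by
  refine LinearMap.ext fun x => ?_
  induction x using LaurentPolynomial.induction_on' with
  | add p q hp hq => rw [map_add, map_add, hp, hq]
  | C_mul_T n a => rw [← smul_eq_C_mul, map_smul, map_smul, h]

theorem wittD_T (n a : ℤ) : wittD n (T a) = (a : ℂ) • T (a + n) := by
  rw [LaurentPolynomial.T, wittD, LinearMap.comp_apply, LinearMap.comp_apply]
  erw [Finsupp.lsum_single]
  rfl

theorem wittD_neg_one_mul (x y : ℂ[T;T⁻¹]) :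
    wittD (-1) (x * y) = x * wittD (-1) y + y * wittD (-1) x := by
  induction x using LaurentPolynomial.induction_on' with
  | add p q hp hq => simp only [add_mul, mul_add, map_add, hp, hq]; ring
  | C_mul_T m a =>
    induction y using LaurentPolynomial.induction_on' with
    | add p q hp hq => simp only [mul_add, add_mul, map_add, hp, hq]; ring
    | C_mul_T n b =>
      simp only [← smul_eq_C_mul, map_smul, ← T_add, wittD_T, mul_smul_comm, smul_mul_assoc]
      simp only [show m + (n + -1) = m + n + -1 by ring, show n + (m + -1) = m + n + -1 by ring]
      push_cast
      module

@[simp]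
theorem mulOp_apply (f x : ℂ[T;T⁻¹]) : mulOp f x = f * x := rfl

noncomputable def derivT : Derivation ℂ ℂ[T;T⁻¹] ℂ[T;T⁻¹] :=
  Derivation.mk' (wittD (-1)) fun x y => by rw [wittD_neg_one_mul, smul_eq_mul, smul_eq_mul]

theorem derivT_T (a : ℤ) : derivT (T a) = (a : ℂ) • T (a - 1) := by
  rw [sub_eq_add_neg, ← wittD_T]
  rfl

local notation "τ" => (T 1 - 1 : ℂ[T;T⁻¹])

theorem derivT_T_sub_one : derivT τ = 1 := by
  rw [map_sub, Derivation.map_one_eq_zero, derivT_T]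
  simp

noncomputable def vecField : ℂ[T;T⁻¹] →ₗ[ℂ] Module.End ℂ ℂ[T;T⁻¹] where
  toFun f := mulOp f * derivT.toLinearMap
  map_add' f g := by ext; simp [add_mul]
  map_smul' c f := by ext; simp

theorem vecField_apply (f x : ℂ[T;T⁻¹]) : vecField f x = f * derivT x := rfl

theorem vecField_injective : Function.Injective vecField := fun f g h => by
  simpa [vecField_apply, derivT_T] using LinearMap.congr_fun h (T 1)

theorem lie_vecField (f g : ℂ[T;T⁻¹]) :
    ⁅vecField f, vecField g⁆ = vecField (f * derivT g - g * derivT f) := by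
  refine LinearMap.ext fun x => ?_
  simp only [Ring.lie_def, LinearMap.sub_apply, Module.End.mul_apply, vecField_apply,
    Derivation.leibniz, smul_eq_mul]
  ring

theorem mulOp_mul_wittD (c : ℂ[T;T⁻¹]) (i : ℤ) :
    mulOp c * wittD i = vecField (c * T (i + 1)) := by
  refine LaurentPolynomial.linearMap_ext fun a => ?_
  rw [Module.End.mul_apply, wittD_T, vecField_apply, derivT_T, mulOp_apply,
    mul_smul_comm, mul_smul_comm, mul_assoc, ← T_add]
  ring_nf

noncomputable def tLaurent : Submodule ℂ ℂ[T;T⁻¹] := LinearMap.range (mulOp τ)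

theorem T_sub_one_mul_mem_tLaurent (y : ℂ[T;T⁻¹]) : τ * y ∈ tLaurent := ⟨y, rfl⟩

theorem T_sub_one_pow_succ_mul_mem_tLaurent (b : ℕ) (y : ℂ[T;T⁻¹]) :
    τ ^ (b + 1) * y ∈ tLaurent := by
  rw [pow_succ', mul_assoc]
  exact T_sub_one_mul_mem_tLaurent _

theorem derivT_pow_mul_T (b : ℕ) (l : ℤ) :
    derivT (τ ^ (b + 1) * T l)
      = ((b : ℂ) + 1) • (τ ^ b * T l) + (l : ℂ) • (τ ^ (b + 1) * T (l - 1)) := by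
  rw [Derivation.leibniz, Derivation.leibniz_pow, derivT_T, derivT_T_sub_one]
  simp only [smul_eq_mul, nsmul_eq_mul, smul_eq_C_mul, add_tsub_cancel_right, map_add, map_one,
    map_natCast, map_intCast]
  push_cast
  ring

theorem T_sub_one_bracket_pow_mul_T (b : ℕ) (l : ℤ) :
    τ * derivT (τ ^ (b + 1) * T l) - τ ^ (b + 1) * T l * derivT τ
      = (b : ℂ) • (τ ^ (b + 1) * T l) + (l : ℂ) • (τ ^ (b + 2) * T (l - 1)) := by
  rw [derivT_pow_mul_T, derivT_T_sub_one]
  simp only [smul_eq_C_mul, map_add, map_one, map_natCast, map_intCast]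
  ring

theorem T_sub_one_mul_T_bracket_pow (b : ℕ) (l : ℤ) :
    τ * T l * derivT (τ ^ (b + 1)) - τ ^ (b + 1) * derivT (τ * T l)
      = (b : ℂ) • (τ ^ (b + 1) * T l) - (l : ℂ) • (τ ^ (b + 2) * T (l - 1)) := by
  have h := derivT_pow_mul_T b 0
  have h' := derivT_pow_mul_T 0 l
  simp only [T_zero, mul_one, pow_zero, one_mul, zero_add, pow_one] at h h'
  rw [h, h']
  simp only [smul_eq_C_mul, map_add, map_one, map_natCast, map_intCast, Nat.cast_zero, map_zero,
    Int.cast_zero]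
  ring

theorem exists_forall_pow_mul_T_mem {P C : Submodule ℂ ℂ[T;T⁻¹]} [FiniteDimensional ℂ C]
    (hP : ∀ f ∈ tLaurent, ∀ p ∈ P, f * derivT p - p * derivT f ∈ P)
    (hPC : tLaurent ≤ P ⊔ C) :
    ∃ N : ℕ, ∀ b ≥ N, ∀ l : ℤ, τ ^ (b + 1) * T l ∈ P := by
  let A : Module.End ℂ ℂ[T;T⁻¹] := vecField τ - 1
  have hA : ∀ x, A x = τ * derivT x - x * derivT τ := fun x => by
    rw [derivT_T_sub_one, mul_one]
    rfl
  have hA_tLaurent : tLaurent ≤ tLaurent.comap A := by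
    rintro _ ⟨y, rfl⟩
    refine ⟨derivT (τ * y) - y, ?_⟩
    simp only [mulOp_apply, hA, derivT_T_sub_one]
    ring
  have hAP : P ≤ P.comap A := fun p hp => by
    simpa only [Submodule.mem_comap, hA] using hP τ ⟨1, mul_one τ⟩ p hp
  obtain ⟨N, hN⟩ := A.exists_forall_ge_mem_of_sub_natCast_smul_mem hA_tLaurent hAP hPC
  have hP0 : ∀ b ≥ N, τ ^ (b + 1) ∈ P := fun b hb => by
    have hb0 := T_sub_one_pow_succ_mul_mem_tLaurent b (T 0)
    simpa using hN b hb _ hb0 (by rw [hA, T_sub_one_bracket_pow_mul_T]; simp)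
  refine ⟨N, fun b hb l =>
    hN (2 * b) (by omega) _ (T_sub_one_pow_succ_mul_mem_tLaurent b (T l)) ?_⟩
  have hbr := hP _ (T_sub_one_mul_mem_tLaurent (T l)) _ (hP0 b hb)
  rw [T_sub_one_mul_T_bracket_pow] at hbr
  convert neg_mem hbr using 1
  rw [hA, T_sub_one_bracket_pow_mul_T]
  push_cast
  module

theorem tW_eq_map_vecField : tW = tLaurent.map vecField := by
  apply le_antisymm
  · rw [tW, Submodule.span_le]
    rintro _ ⟨⟨k, i⟩, rfl⟩
    dsimp only
    rw [mulOp_mul_wittD]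
    exact Submodule.mem_map_of_mem (T_sub_one_pow_succ_mul_mem_tLaurent k _)
  · rintro _ ⟨_, ⟨y, rfl⟩, rfl⟩
    rw [mulOp_apply]
    induction y using LaurentPolynomial.induction_on' with
    | add p q hp hq => rw [mul_add, map_add]; exact add_mem hp hq
    | C_mul_T n a =>
      rw [← smul_eq_C_mul, mul_smul_comm, map_smul]
      refine Submodule.smul_mem _ a (Submodule.subset_span ⟨(0, n - 1), ?_⟩)
      simp only [mulOp_mul_wittD, pow_one, zero_add, sub_add_cancel]

open LaurentPolynomial in
theorem cofinite_ideal_of_tW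
    (J : Submodule ℂ (Module.End ℂ (LaurentPolynomial ℂ)))
    (hJle : J ≤ tW)
    (hideal : ∀ u ∈ tW, ∀ v ∈ J, ⁅u, v⁆ ∈ J)
    (hcofin : ∃ C : Submodule ℂ (Module.End ℂ (LaurentPolynomial ℂ)),
      FiniteDimensional ℂ ↥C ∧ tW ≤ J ⊔ C) :
    ∃ N : ℕ, ∀ (k : ℕ) (i : ℤ),
      mulOp ((T 1 - 1) ^ (N + k + 1)) * wittD i ∈ J := by
  obtain ⟨C, hC, hJC⟩ := hcofin
  have hvec : ∀ f ∈ tLaurent, vecField f ∈ tW := fun f hf =>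
    tW_eq_map_vecField ▸ Submodule.mem_map_of_mem hf
  have hP : ∀ f ∈ tLaurent, ∀ p ∈ J.comap vecField,
      f * derivT p - p * derivT f ∈ J.comap vecField := fun f hf p hp => by
    rw [Submodule.mem_comap, ← lie_vecField]
    exact hideal _ (hvec f hf) _ hp
  have hJ : J ≤ LinearMap.range vecField :=
    hJle.trans (tW_eq_map_vecField ▸ LinearMap.map_le_range)
  have hPC : tLaurent ≤ J.comap vecField ⊔ C.comap vecField := by
    rw [← Submodule.comap_sup_of_le_range hJ]
    exact fun f hf => hJC (hvec f hf)
  have := Submodule.finiteDimensional_comap_of_injective vecField_injective C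
  obtain ⟨N, hN⟩ := exists_forall_pow_mul_T_mem hP hPC
  exact ⟨N, fun k i => mulOp_mul_wittD _ i ▸ hN (N + k) (Nat.le_add_right N k) (i + 1)⟩
end

section
/- Let L be a Lie superalgebra containing the Witt algebra W, and let M be a weight L-module (d_0 acts diagonalizably) with finite dimensional weight spaces and supp(M) ⊆ λ + ℤ. If for every v ∈ M there exists N(v) ∈ ℕ with d_i v = 0 for all i ≥ N(v), then supp(M) is bounded above, i.e., there is μ ∈ λ + ℤ such that M_ν = 0 whenever ν - μ ∈ ℕ. -/
/-!
Write `E μ` for the `d 0`-eigenspace of weight `μ`. If `v ∈ E (λ + m)` is killed by every `d i` with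
`i ≥ N` and `m ≥ N`, then `d m (d (-m) v) = -2m(λ + m) v`, whereas `d m' (d (-m) v) = 0` as soon as
`m' - m ≥ N`. So nonzero such vectors at infinitely many levels, spaced at least `N` apart, would be
lowered to a triangular, hence linearly independent, family in the finite-dimensional `E λ`: for each
`N` they vanish at all high levels. Now the `d i` with `i ≥ 1` raise the level and preserve being
killed from `N`, so starting from any nonzero `v` at a high level and climbing to the top level that
still carries a nonzero vector killed from `N(v)`, we reach a nonzero vector killed by all `d i`,
`i ≥ 1`, at a high level; this contradicts the case `N = 1`.
-/

open Filter

theorem Int.exists_seq_add_le_of_frequently {P : ℤ → Prop} (h : ∃ᶠ t in atTop, P t) {N : ℤ}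
    (hN : 0 ≤ N) : ∃ m : ℕ → ℤ, (∀ j, P (m j) ∧ N ≤ m j) ∧ ∀ i j, i < j → m i + N ≤ m j := by
  choose next hnext hP using fun T : ℤ => frequently_atTop.1 h (T + N)
  let m : ℕ → ℤ := fun j => Nat.rec (next 0) (fun _ t => next t) j
  have hstep : ∀ j, m j + N ≤ m (j + 1) := fun j => hnext (m j)
  refine ⟨m, fun j => ⟨?_, ?_⟩, fun i j hij => ?_⟩
  · cases j <;> exact hP _
  · induction j with
    | zero => exact (zero_add N).symm.le.trans (hnext 0)
    | succ j ih => linarith [hstep j]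
  · induction j, hij using Nat.le_induction with
    | base => exact hstep i
    | succ j _ ih => linarith [hstep j]

theorem eventually_add_intCast_ne_zero {K : Type*} [Field K] [CharZero K] (a : K) :
    ∀ᶠ t : ℤ in atTop, a + t ≠ 0 := by
  have hsub : {t : ℤ | a + t = 0}.Subsingleton := fun s (hs : a + s = 0) t (ht : a + t = 0) => by
    exact_mod_cast (show (s : K) = t by linear_combination hs - ht)
  exact atTop_le_cofinite hsub.finite.eventually_cofinite_notMem

theorem linearIndependent_of_triangular {ι R V W : Type*} [LinearOrder ι] [DivisionRing R]
    [AddCommGroup V] [Module R V] [AddCommGroup W] [Module R W]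
    {X : ι → V} (f : ι → V →ₗ[R] W) (hoff : ∀ i j, i < j → f j (X i) = 0)
    (hdiag : ∀ j, f j (X j) ≠ 0) : LinearIndependent R X := by
  classical
  rw [linearIndependent_iff]
  intro l hl
  by_contra hl0
  have hne : l.support.Nonempty := Finsupp.support_nonempty_iff.2 hl0
  set j := l.support.max' hne
  have hj : j ∈ l.support := l.support.max'_mem hne
  have happ := congrArg (f j) hl
  rw [map_zero, Finsupp.linearCombination_apply, map_finsuppSum, Finsupp.sum,
    Finset.sum_eq_single_of_mem j hj fun i hi hij => by
      rw [map_smul, hoff i j (lt_of_le_of_ne (l.support.le_max' i hi) hij), smul_zero],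
    map_smul, smul_eq_zero] at happ
  exact happ.elim (Finsupp.mem_support_iff.1 hj) (hdiag j)

section Witt

variable {K L M : Type*} [Field K] [LieRing L] [LieAlgebra K L] [AddCommGroup M] [Module K M]
  [LieRingModule L M] [LieModule K L M] {d : ℤ → L}

local notation "𝔼" => Module.End.eigenspace (LieModule.toEnd K L M (d 0))

def AnnihilatedFrom (d : ℤ → L) (N : ℤ) (v : M) : Prop :=
  ∀ i, N ≤ i → ⁅d i, v⁆ = 0

theorem AnnihilatedFrom.mono {N N' : ℤ} {v : M} (hv : AnnihilatedFrom d N v) (h : N ≤ N') :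
    AnnihilatedFrom d N' v :=
  fun i hi => hv i (h.trans hi)

theorem lie_d_zero_of_mem_eigenspace {ν : K} {v : M} (hv : v ∈ 𝔼 ν) : ⁅d 0, v⁆ = ν • v :=
  Module.End.mem_eigenspace_iff.1 hv

variable (hd : ∀ m n : ℤ, ⁅d m, d n⁆ = ((n : K) - m) • d (m + n))
include hd

theorem lie_d_lie_d (a b : ℤ) (v : M) :
    ⁅d a, ⁅d b, v⁆⁆ = ((b : K) - a) • ⁅d (a + b), v⁆ + ⁅d b, ⁅d a, v⁆⁆ := by
  rw [leibniz_lie, hd a b, smul_lie]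

theorem lie_d_mem_eigenspace {ν : K} {v : M} (hv : v ∈ 𝔼 ν) (i : ℤ) : ⁅d i, v⁆ ∈ 𝔼 (ν + i) := by
  rw [Module.End.mem_eigenspace_iff, LieModule.toEnd_apply_apply, lie_d_lie_d hd,
    lie_d_zero_of_mem_eigenspace hv, zero_add, lie_smul]
  push_cast
  module

theorem lie_d_lie_d_eq_zero {N a b : ℤ} {v : M} (hv : AnnihilatedFrom d N v) (ha : N ≤ a)
    (hab : N ≤ a + b) : ⁅d a, ⁅d b, v⁆⁆ = 0 := by
  rw [lie_d_lie_d hd, hv _ hab, hv a ha, lie_zero, smul_zero, add_zero]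

theorem AnnihilatedFrom.lie_d {N j : ℤ} {v : M} (hv : AnnihilatedFrom d N v) (hj : 0 ≤ j) :
    AnnihilatedFrom d N ⁅d j, v⁆ :=
  fun _ hi => lie_d_lie_d_eq_zero hd hv hi (by omega)

theorem lie_d_lie_d_neg {ν : K} {m : ℤ} {v : M} (hv : v ∈ 𝔼 ν) (hm : ⁅d m, v⁆ = 0) :
    ⁅d m, ⁅d (-m), v⁆⁆ = (-2 * m * ν) • v := by
  rw [lie_d_lie_d hd, hm, lie_zero, add_zero, add_neg_cancel, lie_d_zero_of_mem_eigenspace hv,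
    smul_smul]
  push_cast
  ring_nf

theorem linearIndependent_lie_d_neg [CharZero K] {ι : Type*} [LinearOrder ι] {N : ℤ} (hN : 0 < N)
    {m : ι → ℤ} {ν : ι → K} {v : ι → M} (hv : ∀ j, v j ∈ 𝔼 (ν j)) (hν : ∀ j, ν j ≠ 0)
    (hv0 : ∀ j, v j ≠ 0) (hann : ∀ j, AnnihilatedFrom d N (v j)) (hm : ∀ j, N ≤ m j)
    (hgap : ∀ i j, i < j → m i + N ≤ m j) :
    LinearIndependent K fun j => ⁅d (-m j), v j⁆ := by
  refine linearIndependent_of_triangular (fun j => LieModule.toEnd K L M (d (m j)))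
    (fun i j hij => ?_) fun j => ?_
  · exact lie_d_lie_d_eq_zero hd (hann i) (hm j) (by linarith [hgap i j hij])
  · have hmj : (m j : K) ≠ 0 := Int.cast_ne_zero.2 (by linarith [hm j])
    rw [LieModule.toEnd_apply_apply, lie_d_lie_d_neg hd (hv j) (hann j _ (hm j))]
    exact smul_ne_zero (by simp [hmj, hν j]) (hv0 j)

theorem eventually_eq_zero_of_annihilatedFrom [CharZero K] (lam : K)
    [FiniteDimensional K (𝔼 lam)] (N : ℤ) :
    ∀ᶠ t : ℤ in atTop, ∀ v ∈ 𝔼 (lam + t), AnnihilatedFrom d N v → v = 0 := by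
  wlog hN : 0 < N generalizing N
  · filter_upwards [this 1 one_pos] with t ht v hv hann using ht v hv (hann.mono (by omega))
  by_contra h
  simp only [not_eventually, not_forall, exists_prop] at h
  obtain ⟨m, hmP, hgap⟩ :=
    Int.exists_seq_add_le_of_frequently (h.and_eventually (eventually_add_intCast_ne_zero lam)) hN.le
  choose v hv hann hv0 using fun j => (hmP j).1.1
  have hmem : ∀ j, ⁅d (-m j), v j⁆ ∈ 𝔼 lam := fun j => by
    simpa using lie_d_mem_eigenspace hd (hv j) (-m j)
  have hind := linearIndependent_lie_d_neg hd hN hv (fun j => (hmP j).1.2) hv0 hann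
    (fun j => (hmP j).2) hgap
  exact Module.Finite.not_linearIndependent_of_infinite _
    (LinearIndependent.of_comp (𝔼 lam).subtype (v := fun j => ⟨_, hmem j⟩) hind)

theorem exists_singular_vector {lam : K} {N : ℤ}
    (hvanish : ∀ᶠ t : ℤ in atTop, ∀ w ∈ 𝔼 (lam + t), AnnihilatedFrom d N w → w = 0)
    {t : ℤ} {v : M} (hv : v ∈ 𝔼 (lam + t)) (hv0 : v ≠ 0) (hann : AnnihilatedFrom d N v) :
    ∃ s ≥ t, ∃ y ∈ 𝔼 (lam + s), y ≠ 0 ∧ AnnihilatedFrom d 1 y := by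
  obtain ⟨T, hT⟩ := eventually_atTop.1 hvanish
  obtain ⟨s, ⟨hts, y, hy, hy0, hyN⟩, hmax⟩ := Int.exists_greatest_of_bdd
    (P := fun s => t ≤ s ∧ ∃ y ∈ 𝔼 (lam + s), y ≠ 0 ∧ AnnihilatedFrom d N y)
    ⟨max T t, fun s ⟨_, y, hy, hy0, hyN⟩ => by
      by_contra hs
      exact hy0 (hT s (by omega) y hy hyN)⟩
    ⟨t, le_rfl, v, hv, hv0, hann⟩
  refine ⟨s, hts, y, hy, hy0, fun i hi => ?_⟩
  by_contra hne
  have hyi := lie_d_mem_eigenspace hd hy i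
  rw [add_assoc, ← Int.cast_add] at hyi
  have := hmax (s + i) ⟨by omega, _, hyi, hne, hyN.lie_d hd (by omega)⟩
  omega

end Witt

theorem supp_upper_bounded_general
    {L : Type*} [LieRing L] [LieAlgebra ℂ L]
    {M : Type*} [AddCommGroup M] [Module ℂ M]
    [LieRingModule L M] [LieModule ℂ L M]
    (d : ℤ → L)
    (hd : ∀ m n : ℤ, ⁅d m, d n⁆ = ((n : ℂ) - (m : ℂ)) • d (m + n))
    (lam : ℂ)
    -- finite dimensional weight spaces
    (hfd : ∀ μ : ℂ,
      FiniteDimensional ℂ (Module.End.eigenspace (LieModule.toEnd ℂ L M (d 0)) μ))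
    -- local nilpotency of the positive part
    (hvan : ∀ v : M, ∃ N : ℤ, ∀ i : ℤ, N ≤ i → ⁅d i, v⁆ = 0) :
    ∃ μ : ℂ, (∃ n : ℤ, μ = lam + n) ∧
      ∀ n : ℕ, Module.End.eigenspace (LieModule.toEnd ℂ L M (d 0)) (μ + (n + 1)) = ⊥ := by
  have := hfd lam
  obtain ⟨T, hT⟩ := eventually_atTop.1 (eventually_eq_zero_of_annihilatedFrom (M := M) hd lam 1)
  have hbot : ∀ t ≥ T, Module.End.eigenspace (LieModule.toEnd ℂ L M (d 0)) (lam + t) = ⊥ := by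
    intro t ht
    refine (Submodule.eq_bot_iff _).2 fun v hv => ?_
    by_contra hv0
    obtain ⟨N, hN⟩ := hvan v
    obtain ⟨s, hts, y, hy, hy0, hy1⟩ :=
      exists_singular_vector hd (eventually_eq_zero_of_annihilatedFrom hd lam N) hv hv0 hN
    exact hy0 (hT s (ht.trans hts) y hy hy1)
  refine ⟨lam + T, ⟨T, rfl⟩, fun n => ?_⟩
  convert hbot (T + (n + 1)) (by omega) using 2
  push_cast
  ring

theorem supp_upper_bounded
    {L : Type*} [LieRing L] [LieAlgebra ℂ L]
    {M : Type*} [AddCommGroup M] [Module ℂ M]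
    [LieRingModule L M] [LieModule ℂ L M]
    (d : ℤ → L)
    (hd : ∀ m n : ℤ, ⁅d m, d n⁆ = ((n : ℂ) - (m : ℂ)) • d (m + n))
    (lam : ℂ)
    -- M is a weight module: sum of the eigenspaces of the action of d 0
    (hwt : ⨆ μ : ℂ, Module.End.eigenspace (LieModule.toEnd ℂ L M (d 0)) μ = ⊤)
    -- finite dimensional weight spaces
    (hfd : ∀ μ : ℂ,
      FiniteDimensional ℂ (Module.End.eigenspace (LieModule.toEnd ℂ L M (d 0)) μ))
    -- supp(M) ⊆ λ + ℤ
    (hsupp : ∀ μ : ℂ,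
      Module.End.eigenspace (LieModule.toEnd ℂ L M (d 0)) μ ≠ ⊥ → ∃ n : ℤ, μ = lam + n)
    -- local nilpotency of the positive part
    (hvan : ∀ v : M, ∃ N : ℤ, ∀ i : ℤ, N ≤ i → ⁅d i, v⁆ = 0) :
    ∃ μ : ℂ, (∃ n : ℤ, μ = lam + n) ∧
      ∀ n : ℕ, Module.End.eigenspace (LieModule.toEnd ℂ L M (d 0)) (μ + (n + 1)) = ⊥ :=
  supp_upper_bounded_general d hd lam hfd hvan
end

section
/- Let 𝒰̄ be the quotient of U(W̃𝔏) (for 𝔏̃ = W ⋉ (I ⊕ A), A = ℂ[t,t⁻¹], I = 𝔤 ⊗ A) by the ideal generated by t^i · t^j − t^{i+j} and t^0 − 1. Then the subspace 𝒯 of 𝒰̄ spanned by {t^{-i}·d_i − d_0, t^{-i}·x_s(i) : i ∈ ℤ, s ∈ S} satisfies [𝒯, d_0] = 0 and [𝒯, t^k] = 0 for all k ∈ ℤ. -/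
/-!
`ad (d 0)` acts on `t k`, `d k` and `x s k` with eigenvalue `k`, so it kills the weight-zero
products `t (-i) * d i` and `t (-i) * x s i`, as well as `d 0`. The `t k` commute with each other
and with every `x s i`, and `⁅t k, t (-i) * d i⁆ = -k • t k = ⁅t k, d 0⁆`. The elements commuting
with `d 0` and every `t k` form a subalgebra, the centralizer, so it suffices to check generators.
-/

theorem Ring.lie_mul {A : Type*} [Ring A] (a b c : A) : ⁅a, b * c⁆ = ⁅a, b⁆ * c + b * ⁅a, c⁆ := by
  simp only [Ring.lie_def]
  noncomm_ring

theorem Ring.lie_mul_eq_smul_of_lie_eq_smul {R A : Type*} [CommSemiring R] [Ring A] [Algebra R A]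
    {e a b : A} {p q : R} (ha : ⁅e, a⁆ = p • a) (hb : ⁅e, b⁆ = q • b) :
    ⁅e, a * b⁆ = (p + q) • (a * b) := by
  rw [Ring.lie_mul, ha, hb, smul_mul_assoc, mul_smul_comm, add_smul]

theorem Subalgebra.mem_centralizer_insert_range_iff {R A ι : Type*} [CommSemiring R] [Ring A]
    [Algebra R A] {e z : A} {f : ι → A} :
    z ∈ centralizer R (insert e (Set.range f)) ↔ ⁅e, z⁆ = 0 ∧ ∀ i, ⁅f i, z⁆ = 0 := by
  simp only [mem_centralizer_iff, Set.forall_mem_insert, Set.forall_mem_range,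
    ← commute_iff_lie_eq]
  rfl

theorem lie_eq_zero_of_mul_eq_add {A ι : Type*} [Ring A] [AddCommMagma ι] {t : ι → A}
    (htt : ∀ i j, t i * t j = t (i + j)) (i k : ι) : ⁅t i, t k⁆ = 0 := by
  rw [Ring.lie_def, htt, htt, add_comm, sub_self]

section WittLoop

attribute [local instance] LieRing.ofAssociativeRing

variable {U S : Type*} [Ring U] [Algebra ℂ U] {d t : ℤ → U} {x : S → ℤ → U} {β : S → ℂ}

theorem lie_d_zero_t (hdt : ∀ i k : ℤ, ⁅d i, t k⁆ = (k : ℂ) • t (i + k)) (k : ℤ) :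
    ⁅d 0, t k⁆ = (k : ℂ) • t k := by
  rw [hdt, zero_add]

theorem lie_d_zero_t_neg_mul_eq_zero (hdt : ∀ i k : ℤ, ⁅d i, t k⁆ = (k : ℂ) • t (i + k))
    {a : U} {i : ℤ} (ha : ⁅d 0, a⁆ = (i : ℂ) • a) : ⁅d 0, t (-i) * a⁆ = 0 := by
  rw [Ring.lie_mul_eq_smul_of_lie_eq_smul (lie_d_zero_t hdt (-i)) ha, Int.cast_neg,
    neg_add_cancel, zero_smul]

theorem t_neg_mul_d_sub_d_zero_mem_centralizer
    (hdd : ∀ m n : ℤ, ⁅d m, d n⁆ = ((n : ℂ) - (m : ℂ)) • d (m + n))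
    (hdt : ∀ i k : ℤ, ⁅d i, t k⁆ = (k : ℂ) • t (i + k))
    (htt : ∀ i j : ℤ, t i * t j = t (i + j)) (i : ℤ) :
    t (-i) * d i - d 0 ∈ Subalgebra.centralizer ℂ (insert (d 0) (Set.range t)) := by
  have hd : ⁅d 0, d i⁆ = (i : ℂ) • d i := by
    rw [hdd, Int.cast_zero, sub_zero, zero_add]
  refine Subalgebra.mem_centralizer_insert_range_iff.mpr ⟨?_, fun k => ?_⟩
  · rw [lie_sub, lie_d_zero_t_neg_mul_eq_zero hdt hd, lie_self, sub_zero]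
  · have htd : ∀ n, ⁅t k, d n⁆ = -((k : ℂ) • t (n + k)) := fun n => by
      rw [← lie_skew, hdt]
    rw [lie_sub, Ring.lie_mul, lie_eq_zero_of_mul_eq_add htt, htd, htd, zero_mul, zero_add,
      zero_add, mul_neg, mul_smul_comm, htt, neg_add_cancel_left, sub_self]

theorem t_neg_mul_x_mem_centralizer
    (hdx : ∀ (i : ℤ) (s : S) (k : ℤ), ⁅d i, x s k⁆ = ((k : ℂ) + (i : ℂ) * β s) • x s (i + k))
    (hdt : ∀ i k : ℤ, ⁅d i, t k⁆ = (k : ℂ) • t (i + k))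
    (hxt : ∀ (s : S) (j k : ℤ), ⁅x s j, t k⁆ = 0)
    (htt : ∀ i j : ℤ, t i * t j = t (i + j)) (s : S) (i : ℤ) :
    t (-i) * x s i ∈ Subalgebra.centralizer ℂ (insert (d 0) (Set.range t)) := by
  have hx : ⁅d 0, x s i⁆ = (i : ℂ) • x s i := by
    rw [hdx, Int.cast_zero, zero_mul, add_zero, zero_add]
  refine Subalgebra.mem_centralizer_insert_range_iff.mpr ⟨lie_d_zero_t_neg_mul_eq_zero hdt hx,
    fun k => ?_⟩
  rw [Ring.lie_mul, lie_eq_zero_of_mul_eq_add htt, ← lie_skew (t k), hxt, neg_zero, zero_mul,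
    mul_zero, add_zero]

end WittLoop

theorem T_commutes_with_d0_and_A_general
    {U : Type*} [Ring U] [Algebra ℂ U] {S : Type*}
    (d : ℤ → U) (x : S → ℤ → U) (t : ℤ → U) (β : S → ℂ)
    (hdd : ∀ m n : ℤ, ⁅d m, d n⁆ = ((n : ℂ) - (m : ℂ)) • d (m + n))
    (hdx : ∀ (i : ℤ) (s : S) (k : ℤ),
      ⁅d i, x s k⁆ = ((k : ℂ) + (i : ℂ) * β s) • x s (i + k))
    (hdt : ∀ i k : ℤ, ⁅d i, t k⁆ = (k : ℂ) • t (i + k))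
    (hxt : ∀ (s : S) (j k : ℤ), ⁅x s j, t k⁆ = 0)
    (htt : ∀ i j : ℤ, t i * t j = t (i + j)) :
    ∀ u ∈ Submodule.span ℂ
        ((Set.range fun i : ℤ => t (-i) * d i - d 0) ∪
          (Set.range fun p : S × ℤ => t (-p.2) * x p.1 p.2)),
      ⁅u, d 0⁆ = 0 ∧ ∀ k : ℤ, ⁅u, t k⁆ = 0 := by
  intro u hu
  have hspan : Submodule.span ℂ ((Set.range fun i : ℤ => t (-i) * d i - d 0) ∪
      (Set.range fun p : S × ℤ => t (-p.2) * x p.1 p.2)) ≤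
        Subalgebra.toSubmodule (Subalgebra.centralizer ℂ (insert (d 0) (Set.range t))) := by
    rw [Submodule.span_le]
    rintro _ (⟨i, rfl⟩ | ⟨⟨s, i⟩, rfl⟩)
    · exact t_neg_mul_d_sub_d_zero_mem_centralizer hdd hdt htt i
    · exact t_neg_mul_x_mem_centralizer hdx hdt hxt htt s i
  obtain ⟨hd0, ht⟩ := (Subalgebra.mem_centralizer_insert_range_iff (R := ℂ)).mp (hspan hu)
  exact ⟨commute_iff_lie_eq.mp (commute_iff_lie_eq.mpr hd0).symm,
    fun k => commute_iff_lie_eq.mp (commute_iff_lie_eq.mpr (ht k)).symm⟩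

theorem T_commutes_with_d0_and_A
    {U : Type*} [Ring U] [Algebra ℂ U] {S : Type*}
    (d : ℤ → U) (x : S → ℤ → U) (t : ℤ → U) (β : S → ℂ)
    (c : S → S → (S →₀ ℂ))
    (hdd : ∀ m n : ℤ, ⁅d m, d n⁆ = ((n : ℂ) - (m : ℂ)) • d (m + n))
    (hdx : ∀ (i : ℤ) (s : S) (k : ℤ),
      ⁅d i, x s k⁆ = ((k : ℂ) + (i : ℂ) * β s) • x s (i + k))
    (hxx : ∀ (s p : S) (j k : ℤ),
      ⁅x s j, x p k⁆ = (c s p).sum fun q a => a • x q (j + k))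
    (hdt : ∀ i k : ℤ, ⁅d i, t k⁆ = (k : ℂ) • t (i + k))
    (hxt : ∀ (s : S) (j k : ℤ), ⁅x s j, t k⁆ = 0)
    (htt : ∀ i j : ℤ, t i * t j = t (i + j))
    (ht0 : t 0 = 1) :
    ∀ u ∈ Submodule.span ℂ
        ((Set.range fun i : ℤ => t (-i) * d i - d 0) ∪
          (Set.range fun p : S × ℤ => t (-p.2) * x p.1 p.2)),
      ⁅u, d 0⁆ = 0 ∧ ∀ k : ℤ, ⁅u, t k⁆ = 0 :=
  T_commutes_with_d0_and_A_general d x t β hdd hdx hdt hxt htt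
end

section
/- In 𝒰̄, the subspace 𝒯 spanned by {T_i := t^{-i}·d_i − d_0, X_{s,i} := t^{-i}·x_s(i)} is closed under the commutator; in particular [T_i, T_j] = −j T_j + (j−i) T_{i+j} + i T_i, [T_i, X_{s,k}] = −k X_{s,k} + (k + iβ_s) X_{s,k+i}, and [X_{s,i}, X_{p,k}] = t^{-(i+k)}·[x_s, x_p](i+k). -/
/-!
Write `D i = t^{-i} d_i`, so that `T_i = D_i - D_0` (as `t^0 = 1`) and `X_{s,i} = t^{-i} x_s(i)`.
The powers of `t` commute with each other and with every `x_s(k)`, while `ad d_i` acts on them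
as a derivation, so for commuting `p, q` the identity
`[p a, q b] = p q [a, b] + p [a, q] b - q [b, p] a` computes all brackets of the `D_i` and the
`X_{s,k}`. In particular `d_0 = D_0` commutes with all of them, which gives the three formulas;
since they are linear combinations of generators, bilinearity closes the span under the bracket.
-/

open Submodule in
theorem LieAlgebra.lie_mem_span_of_forall_lie_mem_span {R L : Type*} [CommRing R] [LieRing L]
    [LieAlgebra R L] {s : Set L} (hs : ∀ a ∈ s, ∀ b ∈ s, ⁅a, b⁆ ∈ span R s) {u v : L}
    (hu : u ∈ span R s) (hv : v ∈ span R s) : ⁅u, v⁆ ∈ span R s := by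
  induction hu, hv using span_induction₂ with
  | mem_mem a b ha hb => exact hs a ha b hb
  | zero_left => simp
  | zero_right => simp
  | add_left _ _ _ _ _ _ ha hb => simpa only [add_lie] using add_mem ha hb
  | add_right _ _ _ _ _ _ ha hb => simpa only [lie_add] using add_mem ha hb
  | smul_left r _ _ _ _ h => simpa only [smul_lie] using smul_mem _ r h
  | smul_right r _ _ _ _ h => simpa only [lie_smul] using smul_mem _ r h

theorem Ring.lie_mul_mul_of_commute {A : Type*} [Ring A] {p q : A} (h : Commute p q) (a b : A) :
    ⁅p * a, q * b⁆ = p * q * ⁅a, b⁆ + p * ⁅a, q⁆ * b - q * ⁅b, p⁆ * a := by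
  have key : ⁅p * a, q * b⁆ - (p * q * ⁅a, b⁆ + p * ⁅a, q⁆ * b - q * ⁅b, p⁆ * a) =
      (p * q - q * p) * (b * a) := by
    simp only [Ring.lie_def]; noncomm_ring
  rwa [sub_eq_zero.mpr h.eq, zero_mul, sub_eq_zero] at key

theorem commute_of_mul_eq_add {G M : Type*} [AddCommMagma G] [Mul M] {t : G → M}
    (htt : ∀ i j, t i * t j = t (i + j)) (m n : G) : Commute (t m) (t n) := by
  rw [Commute, SemiconjBy, htt, htt, add_comm]

section

attribute [local instance] LieRing.ofAssociativeRing

variable {U : Type*} [Ring U] [Algebra ℂ U] {S : Type*} {d : ℤ → U} {x : S → ℤ → U} {t : ℤ → U}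
  {β : S → ℂ}

theorem lie_tmul_d_tmul_d (hdd : ∀ m n : ℤ, ⁅d m, d n⁆ = ((n : ℂ) - (m : ℂ)) • d (m + n))
    (hdt : ∀ i k : ℤ, ⁅d i, t k⁆ = (k : ℂ) • t (i + k))
    (htt : ∀ i j : ℤ, t i * t j = t (i + j)) (i j : ℤ) :
    ⁅t (-i) * d i, t (-j) * d j⁆ = ((j : ℂ) - i) • (t (-(i + j)) * d (i + j)) -
      (j : ℂ) • (t (-j) * d j) + (i : ℂ) • (t (-i) * d i) := by
  rw [Ring.lie_mul_mul_of_commute (commute_of_mul_eq_add htt _ _), hdd, hdt, hdt]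
  simp only [mul_smul_comm, smul_mul_assoc, htt, neg_add_cancel_left, ← neg_add, Int.cast_neg]
  module

theorem lie_tmul_d_tmul_x (hdx : ∀ (i : ℤ) (s : S) (k : ℤ),
      ⁅d i, x s k⁆ = ((k : ℂ) + (i : ℂ) * β s) • x s (i + k))
    (hdt : ∀ i k : ℤ, ⁅d i, t k⁆ = (k : ℂ) • t (i + k))
    (hxt : ∀ (s : S) (j k : ℤ), ⁅x s j, t k⁆ = 0)
    (htt : ∀ i j : ℤ, t i * t j = t (i + j)) (i : ℤ) (s : S) (k : ℤ) :
    ⁅t (-i) * d i, t (-k) * x s k⁆ = ((k : ℂ) + i * β s) • (t (-(k + i)) * x s (k + i)) -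
      (k : ℂ) • (t (-k) * x s k) := by
  rw [Ring.lie_mul_mul_of_commute (commute_of_mul_eq_add htt _ _), hdx, hdt, hxt]
  simp only [mul_smul_comm, smul_mul_assoc, htt, neg_add_cancel_left, ← neg_add, Int.cast_neg,
    add_comm i k, mul_zero, zero_mul, sub_zero]
  module

theorem lie_tmul_x_tmul_x {c : S → S → (S →₀ ℂ)} (hxx : ∀ (s p : S) (j k : ℤ),
      ⁅x s j, x p k⁆ = (c s p).sum fun q a => a • x q (j + k))
    (hxt : ∀ (s : S) (j k : ℤ), ⁅x s j, t k⁆ = 0)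
    (htt : ∀ i j : ℤ, t i * t j = t (i + j)) (s p : S) (i k : ℤ) :
    ⁅t (-i) * x s i, t (-k) * x p k⁆ = t (-(i + k)) * ((c s p).sum fun q a => a • x q (i + k)) := by
  rw [Ring.lie_mul_mul_of_commute (commute_of_mul_eq_add htt _ _), hxx, hxt, hxt, htt, neg_add]
  simp only [mul_zero, zero_mul, add_zero, sub_zero]

theorem lie_d_zero_tmul_d (hdd : ∀ m n : ℤ, ⁅d m, d n⁆ = ((n : ℂ) - (m : ℂ)) • d (m + n))
    (hdt : ∀ i k : ℤ, ⁅d i, t k⁆ = (k : ℂ) • t (i + k))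
    (htt : ∀ i j : ℤ, t i * t j = t (i + j)) (ht0 : t 0 = 1) (j : ℤ) :
    ⁅d 0, t (-j) * d j⁆ = 0 := by
  simpa [ht0] using lie_tmul_d_tmul_d hdd hdt htt 0 j

theorem lie_d_zero_tmul_x (hdx : ∀ (i : ℤ) (s : S) (k : ℤ),
      ⁅d i, x s k⁆ = ((k : ℂ) + (i : ℂ) * β s) • x s (i + k))
    (hdt : ∀ i k : ℤ, ⁅d i, t k⁆ = (k : ℂ) • t (i + k))
    (hxt : ∀ (s : S) (j k : ℤ), ⁅x s j, t k⁆ = 0)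
    (htt : ∀ i j : ℤ, t i * t j = t (i + j)) (ht0 : t 0 = 1) (s : S) (k : ℤ) :
    ⁅d 0, t (-k) * x s k⁆ = 0 := by
  simpa [ht0] using lie_tmul_d_tmul_x hdx hdt hxt htt 0 s k

theorem lie_T_T (hdd : ∀ m n : ℤ, ⁅d m, d n⁆ = ((n : ℂ) - (m : ℂ)) • d (m + n))
    (hdt : ∀ i k : ℤ, ⁅d i, t k⁆ = (k : ℂ) • t (i + k))
    (htt : ∀ i j : ℤ, t i * t j = t (i + j)) (ht0 : t 0 = 1) (i j : ℤ) :
    ⁅t (-i) * d i - d 0, t (-j) * d j - d 0⁆ =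
        (-(j : ℂ)) • (t (-j) * d j - d 0) +
          ((j : ℂ) - (i : ℂ)) • (t (-(i + j)) * d (i + j) - d 0) +
            (i : ℂ) • (t (-i) * d i - d 0) := by
  rw [sub_lie, lie_sub, lie_sub, lie_tmul_d_tmul_d hdd hdt htt, lie_d_zero_tmul_d hdd hdt htt ht0,
    lie_self, ← lie_skew _ (d 0), lie_d_zero_tmul_d hdd hdt htt ht0]
  module

theorem lie_T_X (hdx : ∀ (i : ℤ) (s : S) (k : ℤ),
      ⁅d i, x s k⁆ = ((k : ℂ) + (i : ℂ) * β s) • x s (i + k))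
    (hdt : ∀ i k : ℤ, ⁅d i, t k⁆ = (k : ℂ) • t (i + k))
    (hxt : ∀ (s : S) (j k : ℤ), ⁅x s j, t k⁆ = 0)
    (htt : ∀ i j : ℤ, t i * t j = t (i + j)) (ht0 : t 0 = 1) (i : ℤ) (s : S) (k : ℤ) :
    ⁅t (-i) * d i - d 0, t (-k) * x s k⁆ =
        (-(k : ℂ)) • (t (-k) * x s k) +
          ((k : ℂ) + (i : ℂ) * β s) • (t (-(k + i)) * x s (k + i)) := by
  rw [sub_lie, lie_tmul_d_tmul_x hdx hdt hxt htt, lie_d_zero_tmul_x hdx hdt hxt htt ht0]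
  module

end

theorem T_closed_under_bracket
    {U : Type*} [Ring U] [Algebra ℂ U] {S : Type*}
    (d : ℤ → U) (x : S → ℤ → U) (t : ℤ → U) (β : S → ℂ)
    (c : S → S → (S →₀ ℂ))
    (hdd : ∀ m n : ℤ, ⁅d m, d n⁆ = ((n : ℂ) - (m : ℂ)) • d (m + n))
    (hdx : ∀ (i : ℤ) (s : S) (k : ℤ),
      ⁅d i, x s k⁆ = ((k : ℂ) + (i : ℂ) * β s) • x s (i + k))
    (hxx : ∀ (s p : S) (j k : ℤ),
      ⁅x s j, x p k⁆ = (c s p).sum fun q a => a • x q (j + k))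
    (hdt : ∀ i k : ℤ, ⁅d i, t k⁆ = (k : ℂ) • t (i + k))
    (hxt : ∀ (s : S) (j k : ℤ), ⁅x s j, t k⁆ = 0)
    (htt : ∀ i j : ℤ, t i * t j = t (i + j))
    (ht0 : t 0 = 1) :
    -- notation: T i := t (-i) * d i - d 0,  X s i := t (-i) * x s i
    (∀ i j : ℤ,
      ⁅t (-i) * d i - d 0, t (-j) * d j - d 0⁆ =
        (-(j : ℂ)) • (t (-j) * d j - d 0) +
          ((j : ℂ) - (i : ℂ)) • (t (-(i + j)) * d (i + j) - d 0) +
            (i : ℂ) • (t (-i) * d i - d 0)) ∧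
    (∀ (i : ℤ) (s : S) (k : ℤ),
      ⁅t (-i) * d i - d 0, t (-k) * x s k⁆ =
        (-(k : ℂ)) • (t (-k) * x s k) +
          ((k : ℂ) + (i : ℂ) * β s) • (t (-(k + i)) * x s (k + i))) ∧
    (∀ (s p : S) (i k : ℤ),
      ⁅t (-i) * x s i, t (-k) * x p k⁆ =
        t (-(i + k)) * ((c s p).sum fun q a => a • x q (i + k))) ∧
    (∀ u ∈ Submodule.span ℂ
        ((Set.range fun i : ℤ => t (-i) * d i - d 0) ∪
          (Set.range fun p : S × ℤ => t (-p.2) * x p.1 p.2)),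
      ∀ v ∈ Submodule.span ℂ
        ((Set.range fun i : ℤ => t (-i) * d i - d 0) ∪
          (Set.range fun p : S × ℤ => t (-p.2) * x p.1 p.2)),
      ⁅u, v⁆ ∈ Submodule.span ℂ
        ((Set.range fun i : ℤ => t (-i) * d i - d 0) ∪
          (Set.range fun p : S × ℤ => t (-p.2) * x p.1 p.2))) := by
  let _ := LieRing.ofAssociativeRing (A := U)
  set 𝒯 := Submodule.span ℂ ((Set.range fun i : ℤ => t (-i) * d i - d 0) ∪
    (Set.range fun p : S × ℤ => t (-p.2) * x p.1 p.2))
  have hT (i : ℤ) : t (-i) * d i - d 0 ∈ 𝒯 := Submodule.subset_span (.inl ⟨i, rfl⟩)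
  have hX (s : S) (k : ℤ) : t (-k) * x s k ∈ 𝒯 := Submodule.subset_span (.inr ⟨(s, k), rfl⟩)
  refine ⟨lie_T_T hdd hdt htt ht0, lie_T_X hdx hdt hxt htt ht0, lie_tmul_x_tmul_x hxx hxt htt,
    fun u hu v hv => LieAlgebra.lie_mem_span_of_forall_lie_mem_span ?_ hu hv⟩
  rintro _ (⟨i, rfl⟩ | ⟨⟨s, i⟩, rfl⟩) _ (⟨j, rfl⟩ | ⟨⟨p, k⟩, rfl⟩)
  · rw [lie_T_T hdd hdt htt ht0]
    exact add_mem (add_mem (𝒯.smul_mem _ (hT _)) (𝒯.smul_mem _ (hT _))) (𝒯.smul_mem _ (hT _))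
  · rw [lie_T_X hdx hdt hxt htt ht0]
    exact add_mem (𝒯.smul_mem _ (hX _ _)) (𝒯.smul_mem _ (hX _ _))
  · rw [← lie_skew, lie_T_X hdx hdt hxt htt ht0]
    exact neg_mem (add_mem (𝒯.smul_mem _ (hX _ _)) (𝒯.smul_mem _ (hX _ _)))
  · rw [lie_tmul_x_tmul_x hxx hxt htt, Finsupp.sum, Finset.mul_sum]
    refine 𝒯.sum_mem fun q _ => ?_
    rw [mul_smul_comm]
    exact 𝒯.smul_mem _ (hX q _)
end

section
/- Let M be a cuspidal 𝔏-module on which all differentiators Ω_{k,p}^{(m)} = Σ_{i=0}^m (−1)^i C(m,i) d_{k−i} d_{p+i} act by zero (k, p ∈ ℤ). Then for every s with β_s ≠ 1 and all j, p ∈ ℤ, the operator Ω̄_{j,p,s}^{(m+2)} = Σ_{i=0}^{m+2} (−1)^i C(m+2,i) x_s(j−i) d_{p+i} annihilates M. -/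
/-!
By Pascal's rule, `Ω̄^{(m+2)}_{j,p}` is the second difference
`Ω̄^{(m)}_{j,p} - 2 Ω̄^{(m)}_{j-1,p+1} + Ω̄^{(m)}_{j-2,p+2}`. Moving `d`'s past `x_s(a)` in
`[x_s(a), d_k d_p]` shows that `(β_s - 1)` times each term `x_s(k) d_p - 2 x_s(k-1) d_{p+1} +
x_s(k-2) d_{p+2}` of it is a fixed combination of six brackets `[x_s(a), d d]` (the terms
`x_s(k+p)` cancel). Summing with the binomial weights turns these into brackets `[x_s(a), Ω^{(m)}]`,
which vanish on `M`; since `β_s ≠ 1`, so does `Ω̄^{(m+2)}`.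
-/

open Finset

section AltChooseSum

variable (R : Type*) {E F : Type*} [CommRing R] [AddCommGroup E] [Module R E]
  [AddCommGroup F] [Module R F]

def altChooseSum (n : ℕ) : (ℕ → E) →ₗ[R] E where
  toFun f := ∑ i ∈ range (n + 1), ((-1 : R) ^ i * n.choose i) • f i
  map_add' f g := by simp only [Pi.add_apply, smul_add, sum_add_distrib]
  map_smul' r f := by simp only [Pi.smul_apply, smul_comm _ r, smul_sum, RingHom.id_apply]

variable {R}

lemma altChooseSum_apply (n : ℕ) (f : ℕ → E) :
    altChooseSum R n f = ∑ i ∈ range (n + 1), ((-1 : R) ^ i * n.choose i) • f i :=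
  rfl

lemma altChooseSum_succ (n : ℕ) (f : ℕ → E) :
    altChooseSum R (n + 1) f = altChooseSum R n (fun i => f i - f (i + 1)) := by
  have h := sum_choose_succ_nsmul (fun i _ => (-1 : R) ^ i • f i) n
  simp only [pow_succ, mul_neg_one, neg_smul, smul_neg, sum_neg_distrib] at h
  simp only [altChooseSum_apply, mul_comm _ ((Nat.choose _ _ : ℕ) : R), mul_smul,
    Nat.cast_smul_eq_nsmul, h, sub_eq_add_neg, smul_add, smul_neg, sum_add_distrib,
    sum_neg_distrib]

lemma altChooseSum_add_two (n : ℕ) (f : ℕ → E) :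
    altChooseSum R (n + 2) f = altChooseSum R n (fun i => f i - 2 • f (i + 1) + f (i + 2)) := by
  rw [altChooseSum_succ, altChooseSum_succ]
  congr 1
  funext i
  abel

lemma map_altChooseSum (L : E →ₗ[R] F) (n : ℕ) (f : ℕ → E) :
    L (altChooseSum R n f) = altChooseSum R n (fun i => L (f i)) := by
  simp only [altChooseSum_apply, map_sum, map_smul]

end AltChooseSum

section Differentiators

variable (R : Type*) {A : Type*} [CommRing R] [Ring A] [Algebra R A]

-- `Ω^{(m)}_{k,p}` and, for `x = x_s`, `Ω̄^{(m)}_{j,p,s}` of the paper.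
def differentiator (d : ℤ → A) (m : ℕ) (k p : ℤ) : A :=
  altChooseSum R m fun i => d (k - i) * d (p + i)

def barDifferentiator (x d : ℤ → A) (m : ℕ) (j p : ℤ) : A :=
  altChooseSum R m fun i => x (j - i) * d (p + i)

variable {R}

lemma lie_altChooseSum (a : A) (n : ℕ) (f : ℕ → A) :
    ⁅a, altChooseSum R n f⁆ = altChooseSum R n (fun i => ⁅a, f i⁆) := by
  simpa only [LinearMap.sub_apply, LinearMap.mulLeft_apply, LinearMap.mulRight_apply,
    ← Ring.lie_def] using map_altChooseSum (LinearMap.mulLeft R a - LinearMap.mulRight R a) n f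

lemma lie_mul_of_lie_eq_smul {d x : ℤ → A} {b : R}
    (hdx : ∀ i k : ℤ, ⁅d i, x k⁆ = ((k : R) + i * b) • x (i + k)) (a k p : ℤ) :
    ⁅x a, d k * d p⁆ = -(((a : R) + k * b) • (x (k + a) * d p)
      + ((a : R) + p * b) • (x (p + a) * d k)
      + (((a : R) + p * b) * ((p + a : ℤ) + k * b)) • x (k + (p + a))) := by
  have hcomm : ∀ i c : ℤ, d i * x c = x c * d i + ((c : R) + i * b) • x (i + c) := by
    intro i c
    rw [← hdx, Ring.lie_def, add_sub_cancel]
  rw [Ring.lie_def, mul_assoc (d k), hcomm p, mul_add, ← mul_assoc (d k), hcomm k a,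
    mul_smul_comm, hcomm k (p + a), add_mul, smul_mul_assoc, ← mul_assoc (x a)]
  module

lemma smul_secondDiff_eq_sum_lie {d x : ℤ → A} {b : R}
    (hdx : ∀ i k : ℤ, ⁅d i, x k⁆ = ((k : R) + i * b) • x (i + k)) (k p : ℤ) :
    (b - 1) • (x k * d p - 2 • (x (k - 1) * d (p + 1)) + x (k - 2) * d (p + 2)) =
      ⁅x 1, d (k - 1) * d p⁆ - 2 • ⁅x 0, d (k - 1) * d (p + 1)⁆ + ⁅x (-1), d (k - 1) * d (p + 2)⁆
        - ⁅x 0, d k * d p⁆ + 2 • ⁅x (-1), d k * d (p + 1)⁆ - ⁅x (-2), d k * d (p + 2)⁆ := by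
  simp only [lie_mul_of_lie_eq_smul hdx]
  ring_nf
  module

lemma smul_barDifferentiator_add_two {d x : ℤ → A} {b : R}
    (hdx : ∀ i k : ℤ, ⁅d i, x k⁆ = ((k : R) + i * b) • x (i + k)) (m : ℕ) (j p : ℤ) :
    (b - 1) • barDifferentiator R x d (m + 2) j p =
      ⁅x 1, differentiator R d m (j - 1) p⁆ - 2 • ⁅x 0, differentiator R d m (j - 1) (p + 1)⁆
        + ⁅x (-1), differentiator R d m (j - 1) (p + 2)⁆ - ⁅x 0, differentiator R d m j p⁆
        + 2 • ⁅x (-1), differentiator R d m j (p + 1)⁆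
        - ⁅x (-2), differentiator R d m j (p + 2)⁆ := by
  simp only [barDifferentiator, differentiator, altChooseSum_add_two, ← map_smul,
    lie_altChooseSum, ← map_nsmul, ← map_sub, ← map_add]
  congr 1
  funext i
  have h := smul_secondDiff_eq_sum_lie hdx (j - i) (p + i)
  simp only [Pi.add_apply, Pi.sub_apply, Pi.smul_apply]
  push_cast
  -- brings the indices `j - (↑i + 1)` and `j - ↑i - 1` etc. to a common normal form
  ring_nf at h ⊢
  exact h

end Differentiators

theorem Omega_bar_annihilates_general {S : Type*} {M : Type*} [AddCommGroup M] [Module ℂ M]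
    (β : S → ℂ)
    (ρd : ℤ → Module.End ℂ M) (ρx : S → ℤ → Module.End ℂ M)
    (hdx : ∀ (i : ℤ) (s : S) (k : ℤ),
      ⁅ρd i, ρx s k⁆ = ((k : ℂ) + (i : ℂ) * β s) • ρx s (i + k))
    -- the differentiators annihilate M:
    (m : ℕ)
    (hOmega : ∀ k p : ℤ,
      (∑ i ∈ Finset.range (m + 1),
        ((-1 : ℂ) ^ i * (m.choose i : ℂ)) • (ρd (k - i) * ρd (p + i))) = 0) :
    ∀ (s : S), β s ≠ 1 → ∀ j p : ℤ,
      (∑ i ∈ Finset.range (m + 2 + 1),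
        ((-1 : ℂ) ^ i * ((m + 2).choose i : ℂ)) • (ρx s (j - i) * ρd (p + i))) = 0 := by
  intro s hs j p
  have hΩ : ∀ k p : ℤ, differentiator ℂ ρd m k p = 0 := hOmega
  have key := smul_barDifferentiator_add_two (fun i k => hdx i s k) m j p
  simp only [hΩ, Ring.lie_def, mul_zero, zero_mul, sub_zero, smul_zero, add_zero] at key
  exact (smul_eq_zero.mp key).resolve_left (sub_ne_zero.mpr hs)

theorem Omega_bar_annihilates {S : Type*} {M : Type*} [AddCommGroup M] [Module ℂ M]
    (β : S → ℂ) (c : S → S → (S →₀ ℂ))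
    (ρd : ℤ → Module.End ℂ M) (ρx : S → ℤ → Module.End ℂ M)
    (hdd : ∀ i j : ℤ, ⁅ρd i, ρd j⁆ = ((j : ℂ) - (i : ℂ)) • ρd (i + j))
    (hdx : ∀ (i : ℤ) (s : S) (k : ℤ),
      ⁅ρd i, ρx s k⁆ = ((k : ℂ) + (i : ℂ) * β s) • ρx s (i + k))
    (hxx : ∀ (s p : S) (j k : ℤ),
      ⁅ρx s j, ρx p k⁆ = ((c s p).sum fun q a => a • ρx q (j + k) : Module.End ℂ M))
    -- M is cuspidal (a uniformly bounded weight module for the d₀-action):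
    (hwt : ⨆ μ : ℂ, Module.End.eigenspace (ρd 0) μ = ⊤)
    (hbdd : ∃ N : ℕ, ∀ μ : ℂ, Module.finrank ℂ (Module.End.eigenspace (ρd 0) μ) ≤ N)
    -- the differentiators annihilate M:
    (m : ℕ)
    (hOmega : ∀ k p : ℤ,
      (∑ i ∈ Finset.range (m + 1),
        ((-1 : ℂ) ^ i * (m.choose i : ℂ)) • (ρd (k - i) * ρd (p + i))) = 0) :
    ∀ (s : S), β s ≠ 1 → ∀ j p : ℤ,
      (∑ i ∈ Finset.range (m + 2 + 1),
        ((-1 : ℂ) ^ i * ((m + 2).choose i : ℂ)) • (ρx s (j - i) * ρd (p + i))) = 0 :=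
  Omega_bar_annihilates_general β ρd ρx hdx m hOmega
end

section
/- Let 𝔤̂ = ℂd ⋉ 𝔤 where 𝔤 = ℂx + ℂy is the Lie superalgebra with x even, y odd, [x,y] = y, [y,y] = 0, [d,x] = 0, [d,y] = −(1/2)y. Then every finite dimensional simple 𝔤̂-module is 1-dimensional and y acts trivially on it. -/
/-!
The kernel of `Y` is a graded submodule stable under `D`, `X` and `Y` (because `[D,Y]` and
`[X,Y]` are multiples of `Y` and `Y² = 0`), and it is nonzero since `Y` is nilpotent; by
simplicity it is everything, so `Y = 0`. Then `V₀` is itself a graded submodule, so `V` is purely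
even or purely odd and every subspace is graded. Now `V` is an irreducible module for the
commuting pair `D, X`, and Schur's lemma makes both act by scalars, so every line is a submodule
and `dim V = 1`.
-/

open LinearMap

section Grading

variable {R M N : Type*} [Ring R] [AddCommGroup M] [Module R M] [AddCommGroup N] [Module R N]

theorem ker_eq_inf_sup_inf_of_mapsTo {V0 V1 : Submodule R M} {U0 U1 : Submodule R N}
    (hgr : V0 ⊔ V1 = ⊤) (hU : Disjoint U0 U1) (f : M →ₗ[R] N)
    (h0 : ∀ v ∈ V0, f v ∈ U0) (h1 : ∀ v ∈ V1, f v ∈ U1) :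
    ker f = (ker f ⊓ V0) ⊔ (ker f ⊓ V1) := by
  refine le_antisymm (fun v hv => ?_) (sup_le inf_le_left inf_le_left)
  obtain ⟨v0, hv0, v1, hv1, rfl⟩ := Submodule.mem_sup.mp (hgr ▸ Submodule.mem_top (x := v))
  have hsum : f v0 + f v1 = 0 := by rw [← map_add]; exact hv
  have hfv0 : f v0 = 0 := by
    refine (Submodule.disjoint_def.mp hU) _ (h0 v0 hv0) ?_
    rw [eq_neg_of_add_eq_zero_left hsum]
    exact Submodule.neg_mem _ (h1 v1 hv1)
  have hfv1 : f v1 = 0 := by rwa [hfv0, zero_add] at hsum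
  exact Submodule.add_mem_sup ⟨hfv0, hv0⟩ ⟨hfv1, hv1⟩

theorem inf_sup_inf_eq_self_of_eq_top {V0 V1 : Submodule R M} (h : V0 = ⊤ ∨ V1 = ⊤)
    (W : Submodule R M) : (W ⊓ V0) ⊔ (W ⊓ V1) = W := by
  rcases h with rfl | rfl <;> simp

end Grading

section Kernel

variable {R M : Type*} [CommRing R] [AddCommGroup M] [Module R M]

theorem mem_ker_of_lie_eq_smul {A Y : Module.End R M} {c : R} (h : ⁅A, Y⁆ = c • Y)
    {v : M} (hv : v ∈ ker Y) : A v ∈ ker Y := by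
  have hAv := congrArg (· v) h
  simp only [Ring.lie_def, LinearMap.sub_apply, Module.End.mul_apply, LinearMap.smul_apply,
    mem_ker.mp hv, map_zero, smul_zero, zero_sub, neg_eq_zero] at hAv
  exact hAv

theorem ker_ne_bot_of_mul_self_eq_zero [Nontrivial M] {Y : Module.End R M} (h : Y * Y = 0) :
    ker Y ≠ ⊥ := by
  intro hbot
  have hY : Y = 0 := by
    rw [← range_eq_bot, eq_bot_iff, ← hbot, range_le_ker_iff]
    exact h
  rw [hY, ker_zero] at hbot
  exact top_ne_bot hbot

end Kernel

section Schur

variable {K V : Type*} [Field K] [IsAlgClosed K] [AddCommGroup V] [Module K V]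
  [FiniteDimensional K V] [Nontrivial V] {S : Set (Module.End K V)}

theorem exists_forall_apply_eq_smul_of_irreducible
    (hS : ∀ W : Submodule K V, (∀ g ∈ S, ∀ v ∈ W, g v ∈ W) → W = ⊥ ∨ W = ⊤)
    {f : Module.End K V} (hf : ∀ g ∈ S, Commute f g) : ∃ μ : K, ∀ v, f v = μ • v := by
  obtain ⟨μ, hμ⟩ := Module.End.exists_eigenvalue f
  refine ⟨μ, fun v => Module.End.mem_eigenspace_iff.mp ?_⟩
  suffices f.eigenspace μ = ⊤ by simp [this]
  refine (hS _ fun g hg w hw => ?_).resolve_left (Module.End.hasEigenvalue_iff.mp hμ)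
  rw [Module.End.mem_eigenspace_iff] at hw ⊢
  rw [← Module.End.mul_apply, (hf g hg).eq, Module.End.mul_apply, hw, map_smul]

theorem finrank_eq_one_of_irreducible
    (hS : ∀ W : Submodule K V, (∀ g ∈ S, ∀ v ∈ W, g v ∈ W) → W = ⊥ ∨ W = ⊤)
    (hcomm : ∀ f ∈ S, ∀ g ∈ S, Commute f g) : Module.finrank K V = 1 := by
  obtain ⟨v, hv⟩ := exists_ne (0 : V)
  have hline : Submodule.span K {v} = ⊤ := by
    refine (hS _ fun g hg w hw => ?_).resolve_left (by simpa using hv)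
    obtain ⟨μ, hμ⟩ := exists_forall_apply_eq_smul_of_irreducible hS (hcomm g hg)
    rw [hμ]
    exact Submodule.smul_mem _ μ hw
  rw [← finrank_top, ← hline, finrank_span_singleton hv]

end Schur

theorem simple_module_qhat_general {V : Type*} [AddCommGroup V] [Module ℂ V]
    [FiniteDimensional ℂ V] [Nontrivial V]
    (V0 V1 : Submodule ℂ V) (hgr : V0 ⊔ V1 = ⊤) (hdisj : V0 ⊓ V1 = ⊥)
    (D X Y : Module.End ℂ V)
    -- D and X are even, Y is odd:
    (hD0 : ∀ v ∈ V0, D v ∈ V0)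
    (hX0 : ∀ v ∈ V0, X v ∈ V0)
    (hY0 : ∀ v ∈ V0, Y v ∈ V1) (hY1 : ∀ v ∈ V1, Y v ∈ V0)
    -- the defining relations of 𝔤̂:
    (hDX : ⁅D, X⁆ = 0)
    (hDY : ⁅D, Y⁆ = -(1 / 2 : ℂ) • Y)
    (hXY : ⁅X, Y⁆ = Y)
    (hYY : Y * Y = 0)
    -- simplicity: no proper nonzero graded submodule
    (hsimple : ∀ W : Submodule ℂ V,
      (∀ v ∈ W, D v ∈ W) → (∀ v ∈ W, X v ∈ W) → (∀ v ∈ W, Y v ∈ W) →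
      W = (W ⊓ V0) ⊔ (W ⊓ V1) → W = ⊥ ∨ W = ⊤) :
    Module.finrank ℂ V = 1 ∧ Y = 0 := by
  have hY : Y = 0 := by
    have hker := hsimple (ker Y) (fun _ => mem_ker_of_lie_eq_smul hDY)
      (fun _ => mem_ker_of_lie_eq_smul (hXY.trans (one_smul ℂ Y).symm))
      (fun v _ => range_le_ker_iff.mpr hYY (mem_range_self Y v))
      (ker_eq_inf_sup_inf_of_mapsTo hgr (disjoint_iff.mpr hdisj).symm Y hY0 hY1)
    exact ker_eq_top.mp (hker.resolve_left (ker_ne_bot_of_mul_self_eq_zero hYY))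
  have hpure : V0 = ⊤ ∨ V1 = ⊤ := by
    have hV0 : V0 = (V0 ⊓ V0) ⊔ (V0 ⊓ V1) := by rw [inf_idem, sup_eq_left.mpr inf_le_left]
    refine (hsimple V0 hD0 hX0 (by simp [hY]) hV0).symm.imp_right fun h => ?_
    rw [← hgr, h, bot_sup_eq]
  refine ⟨finrank_eq_one_of_irreducible (S := {D, X}) (fun W hW => ?_) ?_, hY⟩
  · exact hsimple W (hW D (by simp)) (hW X (by simp)) (by simp [hY])
      (inf_sup_inf_eq_self_of_eq_top hpure W).symm
  · have hDX' : Commute D X := commute_iff_lie_eq.mpr hDX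
    simp [hDX', hDX'.symm]

theorem simple_module_qhat {V : Type*} [AddCommGroup V] [Module ℂ V]
    [FiniteDimensional ℂ V] [Nontrivial V]
    (V0 V1 : Submodule ℂ V) (hgr : V0 ⊔ V1 = ⊤) (hdisj : V0 ⊓ V1 = ⊥)
    (D X Y : Module.End ℂ V)
    -- D and X are even, Y is odd:
    (hD0 : ∀ v ∈ V0, D v ∈ V0) (hD1 : ∀ v ∈ V1, D v ∈ V1)
    (hX0 : ∀ v ∈ V0, X v ∈ V0) (hX1 : ∀ v ∈ V1, X v ∈ V1)
    (hY0 : ∀ v ∈ V0, Y v ∈ V1) (hY1 : ∀ v ∈ V1, Y v ∈ V0)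
    -- the defining relations of 𝔤̂:
    (hDX : ⁅D, X⁆ = 0)
    (hDY : ⁅D, Y⁆ = -(1 / 2 : ℂ) • Y)
    (hXY : ⁅X, Y⁆ = Y)
    (hYY : Y * Y = 0)
    -- simplicity: no proper nonzero graded submodule
    (hsimple : ∀ W : Submodule ℂ V,
      (∀ v ∈ W, D v ∈ W) → (∀ v ∈ W, X v ∈ W) → (∀ v ∈ W, Y v ∈ W) →
      W = (W ⊓ V0) ⊔ (W ⊓ V1) → W = ⊥ ∨ W = ⊤) :
    Module.finrank ℂ V = 1 ∧ Y = 0 :=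
  simple_module_qhat_general V0 V1 hgr hdisj D X Y hD0 hX0 hY0 hY1 hDX hDY hXY hYY hsimple
end
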